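/- With FB-configurations in I_n defined by (FB0), (FB1), (FB2), for each subset S define the multivariate weight Π_{r=1}^n x_r^{t_r(S)}, where t_r(S) is the number of elements of S of the form (r, j). Then the sum of these weights over all FB-configurations S equals the polynomial h_n(x_1,...,x_n) = Π_{r=1}^n (Π_{s=1}^r (1+x_s) − 1). -/

import Mathlib

/-- The index set `I_n = {(i,j) : 1 ≤ i ≤ j ≤ n}`, as a finset of pairs of naturals. -/
def indexSet (n : ℕ) : Finset (ℕ × ℕ) :=
  (Finset.Icc 1 n ×ˢ Finset.Icc 1 n).filter (fun p => p.1 ≤ p.2)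

/-- The cohook of `(i,j)`: `{(k,j) : 1 ≤ k < i} ∪ {(i,ℓ) : j < ℓ ≤ n}`.
For `j = k - 1` with `2 ≤ k ≤ n` this is the virtual cohook
`{(m,k−1) : 1 ≤ m < k} ∪ {(k,ℓ) : k ≤ ℓ ≤ n}`. -/
def cohook (n i j : ℕ) : Finset (ℕ × ℕ) :=
  (Finset.Icc 1 n ×ˢ Finset.Icc 1 n).filter
    (fun p => (p.2 = j ∧ p.1 < i) ∨ (p.1 = i ∧ j < p.2))

/-- `S ⊆ I_n` is an FB-configuration if `(1,n) ∈ S`, each element `≠ (1,n)` of `S` has its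
cohook meeting `S`, and each virtual cohook (for `2 ≤ k ≤ n`) meets `S`. -/
def IsFB (n : ℕ) (S : Finset (ℕ × ℕ)) : Prop :=
  (1, n) ∈ S ∧
  (∀ p ∈ S, p ≠ (1, n) → (cohook n p.1 p.2 ∩ S).Nonempty) ∧
  (∀ k ∈ Finset.Icc 2 n, (cohook n k (k - 1) ∩ S).Nonempty)

instance (n : ℕ) : DecidablePred (IsFB n) := fun S => by
  unfold IsFB; infer_instance

/-!
The FB conditions on a column `j` only concern its top cell, or the virtual cell `(j + 1, j)` when
the column is empty (every other cell has a cell above it): the row of that cell must contain a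
cell further right. So they see the columns to the right of `j` only through the set `R` of rows
these occupy, row `1` being in `R` from the start because of `(1, n)`. Removing the last column `C`
turns `R` into `R ∪ C`, and induction on the number `m` of columns shows that the configurations
on columns `1, …, m` relative to `R ∋ 1` have generating function
`∏_{j ≤ m} (∏_{s ≤ j} (1 + x_s) - [j + 1 ∉ R])`; the sum over the last column is evaluated by a
second induction, on the largest row it may contain. For `R = {1}` this product is `h_n`.
-/

open Finset MvPolynomial

namespace Finset

@[to_additive]
lemma prod_powerset_union {α β : Type*} [DecidableEq α] [CommMonoid β] {s t : Finset α}
    (h : Disjoint s t) (f : Finset α → β) :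
    ∏ u ∈ (s ∪ t).powerset, f u = ∏ a ∈ s.powerset, ∏ b ∈ t.powerset, f (a ∪ b) := by
  have hsplit : ∀ u ∈ (s ∪ t).powerset, u ∩ s ∪ u ∩ t = u := fun u hu => by
    rw [← inter_union_distrib_left, inter_eq_left.mpr (mem_powerset.mp hu)]
  rw [← prod_product']
  refine prod_nbij' (fun u => (u ∩ s, u ∩ t)) (fun p => p.1 ∪ p.2) ?_ ?_ hsplit ?_
    fun u hu => by rw [hsplit u hu]
  · simp
  · simp only [mem_product, mem_powerset]
    exact fun p hp => union_subset_union hp.1 hp.2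
  · rintro ⟨a, b⟩ hp
    simp only [mem_product, mem_powerset] at hp
    have hbs := disjoint_iff_inter_eq_empty.mp (disjoint_of_subset_left hp.2 h.symm)
    have hat := disjoint_iff_inter_eq_empty.mp (disjoint_of_subset_left hp.1 h)
    simp only [union_inter_distrib_right, inter_eq_left.mpr hp.1, inter_eq_left.mpr hp.2, hbs,
      hat, union_empty, empty_union]

end Finset

def column (S : Finset (ℕ × ℕ)) (j : ℕ) : Finset ℕ := (S.filter (·.2 = j)).image Prod.fst

def rowsRightOf (S : Finset (ℕ × ℕ)) (j : ℕ) : Finset ℕ := (S.filter (j < ·.2)).image Prod.fst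

@[simp]
lemma mem_column {S : Finset (ℕ × ℕ)} {i j : ℕ} : i ∈ column S j ↔ (i, j) ∈ S := by
  simp [column]

@[simp]
lemma mem_rowsRightOf {S : Finset (ℕ × ℕ)} {i j : ℕ} :
    i ∈ rowsRightOf S j ↔ ∃ l, j < l ∧ (i, l) ∈ S := by
  simp [rowsRightOf, and_comm]

/-- For `C ⊆ [1, k)` this is `min C`, or `k` when `C = ∅`. -/
def topRow (k : ℕ) (C : Finset ℕ) : ℕ := (insert k C).min' (insert_nonempty k C)

lemma topRow_mem (k : ℕ) (C : Finset ℕ) : topRow k C ∈ insert k C := min'_mem _ _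

lemma topRow_le {k a : ℕ} {C : Finset ℕ} (h : a ∈ insert k C) : topRow k C ≤ a := min'_le _ _ h

@[simp]
lemma topRow_empty (k : ℕ) : topRow k ∅ = k := by simp [topRow]

lemma topRow_insert {k a : ℕ} (C : Finset ℕ) (h : a < k) :
    topRow k (insert a C) = topRow a C := by
  have := topRow_le (k := a) (mem_insert_self a C)
  rw [topRow, min'_insert _ _ (insert_nonempty a C)]
  exact min_eq_right (by unfold topRow at this; omega)

noncomputable def columnPoly (R : Finset ℕ) (k j : ℕ) : MvPolynomial ℕ ℤ :=
  (∏ s ∈ Icc 1 j, (1 + X s)) - if k ∈ R then 0 else 1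

lemma columnPoly_union_of_notMem {R C : Finset ℕ} {k : ℕ} (j : ℕ) (hk : k ∉ C) :
    columnPoly (R ∪ C) k j = columnPoly R k j := by
  simp [columnPoly, hk]

lemma columnPoly_insert_of_ne {R : Finset ℕ} {a k : ℕ} (j : ℕ) (hk : k ≠ a) :
    columnPoly (insert a R) k j = columnPoly R k j := by
  simp [columnPoly, hk]

lemma columnPoly_of_mem {R : Finset ℕ} {k : ℕ} (j : ℕ) (hk : k ∈ R) :
    columnPoly R k j = ∏ s ∈ Icc 1 j, (1 + X s) := by
  simp [columnPoly, hk]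

lemma columnPoly_succ (R : Finset ℕ) (k j : ℕ) :
    columnPoly R k (j + 1) = columnPoly R k j + X (j + 1) * ∏ s ∈ Icc 1 j, (1 + X s) := by
  rw [columnPoly, columnPoly, prod_Icc_succ_top (by omega)]
  ring

lemma sum_columnPoly_union {R : Finset ℕ} (hR : 1 ∈ R) (m : ℕ) {k : ℕ} (hk : m + 1 < k) :
    ∑ C ∈ (Icc 1 (m + 1)).powerset with topRow k C ∈ R,
        (∏ i ∈ C, X i) * ∏ j ∈ Icc 1 m, columnPoly (R ∪ C) (j + 1) j
      = (∏ j ∈ Icc 1 m, columnPoly R (j + 1) j) * columnPoly R k (m + 1) := by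
  induction m generalizing k with
  | zero =>
    have : topRow k {1} = 1 := by simp [topRow]; omega
    rw [sum_filter, show Icc 1 (0 + 1) = insert 1 ∅ from rfl,
      sum_powerset_insert (notMem_empty 1)]
    by_cases hkR : k ∈ R <;> simp [columnPoly, this, hR, hkR]
  | succ m ih =>
    have hm2 : ∀ C ∈ (Icc 1 (m + 1)).powerset, m + 1 + 1 ∉ C := fun C hC h => by
      simpa using mem_powerset.mp hC h
    have hwithout : ∀ C ∈ (Icc 1 (m + 1)).powerset,
        (if topRow k C ∈ R then
          (∏ i ∈ C, X i) * ∏ j ∈ Icc 1 (m + 1), columnPoly (R ∪ C) (j + 1) j else 0)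
        = (if topRow k C ∈ R then
          (∏ i ∈ C, X i) * ∏ j ∈ Icc 1 m, columnPoly (R ∪ C) (j + 1) j else 0)
          * columnPoly R (m + 1 + 1) (m + 1) := by
      intro C hC
      rw [prod_Icc_succ_top (by omega), columnPoly_union_of_notMem _ (hm2 C hC)]
      split_ifs <;> ring
    have hwith : ∀ C ∈ (Icc 1 (m + 1)).powerset,
        (if topRow k (insert (m + 1 + 1) C) ∈ R then
          (∏ i ∈ insert (m + 1 + 1) C, X i) *
            ∏ j ∈ Icc 1 (m + 1), columnPoly (R ∪ insert (m + 1 + 1) C) (j + 1) j else 0)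
        = (if topRow (m + 1 + 1) C ∈ R then
          (∏ i ∈ C, X i) * ∏ j ∈ Icc 1 m, columnPoly (R ∪ C) (j + 1) j else 0)
          * (X (m + 1 + 1) * ∏ s ∈ Icc 1 (m + 1), (1 + X s)) := by
      intro C hC
      rw [topRow_insert C (by omega), prod_insert (hm2 C hC), prod_Icc_succ_top (by omega),
        union_insert, columnPoly_of_mem _ (mem_insert_self _ _),
        prod_congr rfl fun j hj => columnPoly_insert_of_ne _ (by simp at hj; omega)]
      split_ifs <;> ring
    rw [sum_filter, ← insert_Icc_right_eq_Icc_add_one (by omega : 1 ≤ m + 1 + 1),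
      sum_powerset_insert (by simp), sum_congr rfl hwithout, sum_congr rfl hwith, ← sum_mul,
      ← sum_mul, ← sum_filter, ← sum_filter, ih (by omega), ih (by omega),
      prod_Icc_succ_top (by omega : 1 ≤ m + 1) (fun j => columnPoly R (j + 1) j),
      columnPoly_succ R k (m + 1)]
    ring

@[simp]
lemma mem_indexSet {n : ℕ} {p : ℕ × ℕ} : p ∈ indexSet n ↔ 1 ≤ p.1 ∧ p.1 ≤ p.2 ∧ p.2 ≤ n := by
  simp only [indexSet, mem_filter, mem_product, mem_Icc]; omega

lemma indexSet_succ (m : ℕ) :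
    indexSet (m + 1) = indexSet m ∪ (Icc 1 (m + 1)).image (·, m + 1) := by
  ext ⟨i, j⟩
  simp only [mem_indexSet, mem_union, mem_image, mem_Icc, Prod.mk.injEq]
  constructor
  · intro h
    by_cases hj : j = m + 1
    · exact Or.inr ⟨i, by omega, rfl, hj.symm⟩
    · exact Or.inl (by omega)
  · rintro (h | ⟨i, hi, rfl, rfl⟩) <;> omega

lemma disjoint_image_of_subset_indexSet {m : ℕ} {T : Finset (ℕ × ℕ)} (hT : T ⊆ indexSet m)
    (C : Finset ℕ) : Disjoint T (C.image (·, m + 1)) := by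
  simp only [disjoint_left, mem_image, not_exists, not_and]
  rintro p hp i - rfl
  have := mem_indexSet.mp (hT hp)
  omega

lemma sum_powerset_indexSet_succ {M : Type*} [AddCommMonoid M] (m : ℕ)
    (f : Finset (ℕ × ℕ) → M) :
    ∑ S ∈ (indexSet (m + 1)).powerset, f S
      = ∑ C ∈ (Icc 1 (m + 1)).powerset, ∑ T ∈ (indexSet m).powerset,
          f (T ∪ C.image (·, m + 1)) := by
  rw [indexSet_succ, sum_powerset_union (disjoint_image_of_subset_indexSet subset_rfl _), sum_comm, powerset_image,
    sum_image (image_injOn_powerset_of_injOn (Prod.mk_left_injective (m + 1)).injOn)]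

lemma prod_union_image_fst {R : Type*} [CommMonoid R] {m : ℕ} {T : Finset (ℕ × ℕ)}
    (hT : T ⊆ indexSet m) (C : Finset ℕ) (f : ℕ → R) :
    ∏ p ∈ T ∪ C.image (·, m + 1), f p.1 = (∏ i ∈ C, f i) * ∏ p ∈ T, f p.1 := by
  rw [prod_union (disjoint_image_of_subset_indexSet hT C), prod_image (Prod.mk_left_injective (m + 1)).injOn, mul_comm]

/-- The FB conditions on the columns `1, …, m`, where the rows in `R` count as having a cell to the
right of column `m`; the virtual cell below column `j` lies in row `j + 1`. -/
def IsFBRel (R : Finset ℕ) (m : ℕ) (S : Finset (ℕ × ℕ)) : Prop :=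
  ∀ j ∈ Icc 1 m, topRow (j + 1) (column S j) ∈ R ∪ rowsRightOf S j

instance (R : Finset ℕ) (m : ℕ) : DecidablePred (IsFBRel R m) := fun S => by
  unfold IsFBRel; infer_instance

lemma isFBRel_union_image_iff {R C : Finset ℕ} {m : ℕ} {T : Finset (ℕ × ℕ)}
    (hT : T ⊆ indexSet m) :
    IsFBRel R (m + 1) (T ∪ C.image (·, m + 1)) ↔
      topRow (m + 2) C ∈ R ∧ IsFBRel (R ∪ C) m T := by
  have hTcol : ∀ p ∈ T, p.2 ≤ m := fun p hp => (mem_indexSet.mp (hT hp)).2.2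
  have hcol_last : column (T ∪ C.image (·, m + 1)) (m + 1) = C := by
    ext i
    simpa using fun h => absurd (hTcol _ h) (by omega)
  have hright_last : rowsRightOf (T ∪ C.image (·, m + 1)) (m + 1) = ∅ := by
    ext i
    simp only [mem_rowsRightOf, mem_union, mem_image, Prod.mk.injEq, notMem_empty, iff_false]
    rintro ⟨l, hl, h | ⟨a, -, -, rfl⟩⟩
    · exact absurd (hTcol _ h) (by omega)
    · omega
  have hcol : ∀ j ∈ Icc 1 m, column (T ∪ C.image (·, m + 1)) j = column T j := by
    intro j hj
    ext i
    simp only [mem_Icc] at hj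
    simp only [mem_column, mem_union, mem_image, Prod.mk.injEq]
    exact or_iff_left (by omega)
  have hright : ∀ j ∈ Icc 1 m,
      rowsRightOf (T ∪ C.image (·, m + 1)) j = rowsRightOf T j ∪ C := by
    intro j hj
    ext i
    simp only [mem_Icc] at hj
    simp only [mem_rowsRightOf, mem_union, mem_image, Prod.mk.injEq]
    constructor
    · rintro ⟨l, hl, h | ⟨a, ha, rfl, rfl⟩⟩
      exacts [Or.inl ⟨l, hl, h⟩, Or.inr ha]
    · rintro (⟨l, hl, h⟩ | h)
      exacts [⟨l, hl, Or.inl h⟩, ⟨m + 1, by omega, Or.inr ⟨i, h, rfl, rfl⟩⟩]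
  rw [IsFBRel, ← insert_Icc_right_eq_Icc_add_one (by omega), forall_mem_insert, hcol_last,
    hright_last, union_empty]
  refine and_congr Iff.rfl (forall₂_congr fun j hj => ?_)
  rw [hcol j hj, hright j hj, union_assoc, union_comm C]

lemma sum_isFBRel {R : Finset ℕ} (hR : 1 ∈ R) (m : ℕ) :
    ∑ S ∈ (indexSet m).powerset with IsFBRel R m S, ∏ p ∈ S, (X p.1 : MvPolynomial ℕ ℤ)
      = ∏ j ∈ Icc 1 m, columnPoly R (j + 1) j := by
  induction m generalizing R with
  | zero => simp [IsFBRel, show indexSet 0 = ∅ by ext; simp; omega]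
  | succ m ih =>
    calc _ = ∑ C ∈ (Icc 1 (m + 1)).powerset with topRow (m + 2) C ∈ R, (∏ i ∈ C, X i) *
            ∑ T ∈ (indexSet m).powerset with IsFBRel (R ∪ C) m T,
              ∏ p ∈ T, (X p.1 : MvPolynomial ℕ ℤ) := by
          rw [sum_filter, sum_powerset_indexSet_succ, sum_filter]
          refine sum_congr rfl fun C _ => ?_
          by_cases htop : topRow (m + 2) C ∈ R
          · rw [if_pos htop, sum_filter, mul_sum]
            refine sum_congr rfl fun T hT => ?_
            simp only [isFBRel_union_image_iff (mem_powerset.mp hT), htop, true_and,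
              prod_union_image_fst (mem_powerset.mp hT), mul_ite, mul_zero]
          · rw [if_neg htop]
            refine sum_eq_zero fun T hT => ?_
            simp only [isFBRel_union_image_iff (mem_powerset.mp hT), htop, false_and, if_false]
      _ = _ := by
          simp_rw [ih (mem_union_left _ hR)]
          rw [sum_columnPoly_union hR m (by omega), prod_Icc_succ_top (by omega)]

lemma cohook_inter_nonempty_iff {n i j : ℕ} {S : Finset (ℕ × ℕ)} (hS : S ⊆ indexSet n) :
    (cohook n i j ∩ S).Nonempty ↔ (∃ a ∈ column S j, a < i) ∨ i ∈ rowsRightOf S j := by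
  simp only [Finset.Nonempty, cohook, mem_inter, mem_filter, mem_product, mem_Icc, mem_column,
    mem_rowsRightOf]
  constructor
  · rintro ⟨⟨a, l⟩, ⟨-, ⟨rfl, ha⟩ | ⟨rfl, hl⟩⟩, hS'⟩
    exacts [Or.inl ⟨a, hS', ha⟩, Or.inr ⟨l, hl, hS'⟩]
  · rintro (⟨a, ha, hai⟩ | ⟨l, hl, hil⟩)
    · have := mem_indexSet.mp (hS ha)
      exact ⟨(a, j), ⟨by omega, Or.inl ⟨rfl, hai⟩⟩, ha⟩
    · have := mem_indexSet.mp (hS hil)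
      exact ⟨(i, l), ⟨by omega, Or.inr ⟨rfl, hl⟩⟩, hil⟩

lemma isFBRel_of_isFB {n : ℕ} {S : Finset (ℕ × ℕ)} (hS : S ⊆ indexSet n) (hFB : IsFB n S) :
    IsFBRel {1} n S := by
  simp only [IsFB, cohook_inter_nonempty_iff hS] at hFB
  obtain ⟨hcorner, hcell, hvirtual⟩ := hFB
  intro j hj
  rw [mem_Icc] at hj
  rw [mem_union, mem_singleton]
  have hle : ∀ a ∈ column S j, topRow (j + 1) (column S j) ≤ a :=
    fun a ha => topRow_le (mem_insert_of_mem ha)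
  rcases mem_insert.mp (topRow_mem (j + 1) (column S j)) with htop | htop
  · have hjn : j ≠ n := by
      rintro rfl
      have := hle 1 (mem_column.mpr hcorner)
      omega
    rcases hvirtual (j + 1) (mem_Icc.mpr (by omega)) with ⟨a, ha, hlt⟩ | hright
    · have := hle a (by simpa using ha)
      omega
    · exact Or.inr (by simpa [htop] using hright)
  · by_cases hc : (topRow (j + 1) (column S j), j) = (1, n)
    · exact Or.inl (Prod.mk.inj hc).1
    · rcases hcell _ (mem_column.mp htop) hc with ⟨a, ha, hlt⟩ | hright
      · exact absurd (hle a ha) (by omega)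
      · exact Or.inr hright

lemma isFB_of_isFBRel {n : ℕ} (hn : 0 < n) {S : Finset (ℕ × ℕ)} (hS : S ⊆ indexSet n)
    (h : IsFBRel {1} n S) : IsFB n S := by
  have hbound : ∀ i j, (i, j) ∈ S → 1 ≤ i ∧ i ≤ j ∧ j ≤ n := fun i j h => mem_indexSet.mp (hS h)
  simp only [IsFBRel, mem_union, mem_singleton] at h
  simp only [IsFB, cohook_inter_nonempty_iff hS]
  have hcorner : (1, n) ∈ S := by
    rcases h n (mem_Icc.mpr ⟨hn, le_rfl⟩) with htop | hright
    · rcases mem_insert.mp (topRow_mem (n + 1) (column S n)) with h' | h'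
      · omega
      · rwa [htop, mem_column] at h'
    · obtain ⟨l, hl, hS'⟩ := mem_rowsRightOf.mp hright
      have := hbound _ _ hS'
      omega
  refine ⟨hcorner, ?_, ?_⟩
  · rintro ⟨i, j⟩ hij hne
    by_contra! habove
    have hj := hbound i j hij
    have htop : topRow (j + 1) (column S j) = i := by
      have := topRow_le (k := j + 1) (mem_insert_of_mem (mem_column.mpr hij))
      rcases mem_insert.mp (topRow_mem (j + 1) (column S j)) with h' | h'
      · omega
      · have := habove.1 _ h'
        omega
    rcases h j (mem_Icc.mpr (by omega)) with h' | h'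
    · obtain rfl : i = 1 := htop.symm.trans h'
      have hjn : j < n := lt_of_le_of_ne hj.2.2 fun hjn => hne (by rw [hjn])
      exact habove.2 (mem_rowsRightOf.mpr ⟨n, hjn, hcorner⟩)
    · exact habove.2 (htop ▸ h')
  · intro k hk
    rw [mem_Icc] at hk
    by_cases hcol : (column S (k - 1)).Nonempty
    · obtain ⟨a, ha⟩ := hcol
      have := hbound _ _ (mem_column.mp ha)
      exact Or.inl ⟨a, ha, by omega⟩
    · have hempty := not_nonempty_iff_eq_empty.mp hcol
      rcases h (k - 1) (mem_Icc.mpr (by omega)) with h' | h'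
      · rw [hempty, topRow_empty] at h'
        omega
      · rw [hempty, topRow_empty, Nat.sub_add_cancel (by omega)] at h'
        exact Or.inr h'

open MvPolynomial in
/-- The sum over all FB-configurations `S` of the weight `Π_{r=1}^n x_r^{t_r(S)}`,
where `t_r(S)` is the number of elements of `S` in row `r`, equals the polynomial
`h_n(x_1,…,x_n) = Π_{r=1}^n (Π_{s=1}^r (1+x_s) − 1)` (variables indexed by `1,…,n`). -/
theorem FB_weight_sum_eq_h (n : ℕ) (hn : 0 < n) :
    ∑ S ∈ (indexSet n).powerset.filter (IsFB n),
        ∏ r ∈ Finset.Icc 1 n, (X r : MvPolynomial ℕ ℤ) ^ (S.filter (fun p => p.1 = r)).card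
      = ∏ r ∈ Finset.Icc 1 n, ((∏ s ∈ Finset.Icc 1 r, (1 + (X s : MvPolynomial ℕ ℤ))) - 1) := by
  have hweight : ∀ S ∈ (indexSet n).powerset.filter (IsFBRel {1} n),
      ∏ r ∈ Icc 1 n, (X r : MvPolynomial ℕ ℤ) ^ (S.filter (fun p => p.1 = r)).card
        = ∏ p ∈ S, X p.1 := by
    intro S hS
    simp_rw [← prod_const]
    refine prod_fiberwise_of_maps_to' (fun p hp => ?_) _
    have := mem_indexSet.mp (mem_powerset.mp (mem_filter.mp hS).1 hp)
    exact mem_Icc.mpr ⟨this.1, by omega⟩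
  have hFB : ∀ S ∈ (indexSet n).powerset, IsFB n S ↔ IsFBRel {1} n S := fun S hS =>
    ⟨isFBRel_of_isFB (mem_powerset.mp hS), isFB_of_isFBRel hn (mem_powerset.mp hS)⟩
  rw [filter_congr hFB, sum_congr rfl hweight, sum_isFBRel (mem_singleton_self 1)]
  refine prod_congr rfl fun r hr => ?_
  rw [columnPoly, if_neg (by simp only [mem_Icc, mem_singleton] at hr ⊢; omega)]
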